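/- Suppose Φ is a column vector in ℂ⁴ solving the linear system at spectral parameter λ₁ (with Im λ₁ ≠ 0 and λ₁ + λ₁* ≠ 0), Σ = diag(1,1,κ,κ), Λ = diag(σ₂,σ₂). Define the Darboux matrix T(λ) = I₄ - [Φ, ΛΦ*] · M⁻¹ · diag(1/(λ-λ₁*), 1/(λ+λ₁)) applied with M = diag((Φ†ΣΦ)/(λ₁-λ₁*), (Φ†ΣΦ)/(λ₁-λ₁*)) as in the paper. Then det T(λ) = ((λ-λ₁)(λ+λ₁*)) / ((λ-λ₁*)(λ+λ₁)) for all λ not in {λ₁*, -λ₁}. -/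

import Mathlib

open Matrix Complex

/-! Sylvester's identity `det (1 - A N) = det (1 - N A)` reduces the 4×4 determinant to a 2×2 one.
Because `ΣΛ` and `ΛΣ` are skew-symmetric and `ΛΣΛ = -Σ`, the 2×2 matrix `c⁻¹ B Σ A` is diagonal,
with entries `(λ₁ - λ₁*) / (λ - λ₁*)` and `(λ₁ - λ₁*) / (λ + λ₁)`; the two factors `1 - ·` are the
two factors of the claimed ratio. -/

namespace Matrix

variable {m n R : Type*} [Fintype n]

theorem det_one_sub_mul_of_mul_eq_diagonal [Fintype m] [DecidableEq m] [DecidableEq n]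
    [CommRing R] {A : Matrix n m R} {B : Matrix m n R} {d : m → R} (h : B * A = diagonal d) :
    det (1 - A * B) = ∏ i, (1 - d i) := by
  rw [det_one_sub_mul_comm, h, ← diagonal_one, diagonal_sub, det_diagonal]

theorem dotProduct_mulVec_comm_of_transpose_eq [CommSemiring R] {M : Matrix n n R}
    (hM : Mᵀ = M) (x y : n → R) : x ⬝ᵥ M *ᵥ y = y ⬝ᵥ M *ᵥ x := by
  rw [dotProduct_mulVec, ← mulVec_transpose, hM, dotProduct_comm]

theorem dotProduct_mulVec_self_eq_zero_of_transpose_eq_neg [CommRing R] [NoZeroDivisors R]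
    [CharZero R] {M : Matrix n n R} (hM : Mᵀ = -M) (x : n → R) : x ⬝ᵥ M *ᵥ x = 0 := by
  have h : x ⬝ᵥ M *ᵥ x = -(x ⬝ᵥ M *ᵥ x) := by
    conv_lhs => rw [dotProduct_mulVec, ← mulVec_transpose, hM, dotProduct_comm]
    rw [neg_mulVec, dotProduct_neg]
  have : (2 : R) * (x ⬝ᵥ M *ᵥ x) = 0 := by linear_combination h
  simpa using this

theorem of_mul_mul_transpose_of_apply [CommSemiring R] (u : m → n → R) (M : Matrix n n R)
    (v : m → n → R) (i j : m) : (of u * M * (of v)ᵀ) i j = u i ⬝ᵥ M *ᵥ v j := by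
  rw [dotProduct_mulVec, mul_apply']
  rfl

theorem transpose_mul_eq_neg_of_commute [CommRing R] {Λ S : Matrix n n R} (hΛ : Λᵀ = -Λ)
    (hS : Sᵀ = S) (hΛS : Λ * S = S * Λ) : (S * Λ)ᵀ = -(S * Λ) := by
  rw [transpose_mul, hΛ, hS, Matrix.neg_mul, hΛS]

variable [CommRing R] [NoZeroDivisors R] [CharZero R]

theorem darboux_gram_eq_diagonal [DecidableEq n] {Λ S : Matrix n n R} (hΛ : Λᵀ = -Λ)
    (hΛΛ : Λ * Λ = -1) (hS : Sᵀ = S) (hΛS : Λ * S = S * Λ) (x y : n → R) (a b : R) :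
    of ![a • y, -(b • x ᵥ* Λ)] * S * (of ![x, Λ *ᵥ y])ᵀ =
      diagonal ![a * (y ⬝ᵥ S *ᵥ x), b * (y ⬝ᵥ S *ᵥ x)] := by
  have hSΛ := transpose_mul_eq_neg_of_commute hΛ hS hΛS
  have hΛS' : (Λ * S)ᵀ = -(Λ * S) := hΛS ▸ hSΛ
  have hΛSΛ : Λ * S * Λ = -S := by
    rw [hΛS, Matrix.mul_assoc, hΛΛ, mul_neg_one]
  ext i j
  rw [of_mul_mul_transpose_of_apply]
  fin_cases i <;> fin_cases j
  · simp [smul_dotProduct]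
  · simp [smul_dotProduct, mulVec_mulVec, dotProduct_mulVec_self_eq_zero_of_transpose_eq_neg hSΛ]
  · simp [smul_dotProduct, ← dotProduct_mulVec, mulVec_mulVec,
      dotProduct_mulVec_self_eq_zero_of_transpose_eq_neg hΛS']
  · simp [smul_dotProduct, ← dotProduct_mulVec, mulVec_mulVec, ← Matrix.mul_assoc, hΛSΛ,
      neg_mulVec, dotProduct_mulVec_comm_of_transpose_eq hS x y]

end Matrix

local notation "Λ₄" => !![0, 1, 0, 0; -1, 0, 0, 0; 0, 0, 0, 1; 0, 0, -1, 0]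

section Sigma2

variable {R : Type*} [CommRing R]

theorem blockSigma2_transpose : (Λ₄ : Matrix (Fin 4) (Fin 4) R)ᵀ = -Λ₄ := by
  ext i j; fin_cases i <;> fin_cases j <;> simp

theorem blockSigma2_mul_self : (Λ₄ : Matrix (Fin 4) (Fin 4) R) * Λ₄ = -1 := by
  ext i j; fin_cases i <;> fin_cases j <;> simp [Matrix.mul_apply, Fin.sum_univ_four]

theorem blockSigma2_mul_diagonal (a b : R) :
    (Λ₄ : Matrix (Fin 4) (Fin 4) R) * diagonal ![a, a, b, b] = diagonal ![a, a, b, b] * Λ₄ := by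
  ext i j; fin_cases i <;> fin_cases j <;> simp

end Sigma2

theorem stmt5_general (κ : ℝ)
    (lam₁ : ℂ)
    (Φ : Fin 4 → ℂ)
    (Lam : Matrix (Fin 4) (Fin 4) ℂ)
    (hLam : Lam = !![0,1,0,0; -1,0,0,0; 0,0,0,1; 0,0,-1,0])
    (Sig : Matrix (Fin 4) (Fin 4) ℂ)
    (hSig : Sig = Matrix.diagonal ![1, 1, (κ : ℂ), (κ : ℂ)])
    (c : ℂ) (hc : c = (star Φ ⬝ᵥ Sig.mulVec Φ) / (lam₁ - (starRingEnd ℂ) lam₁))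
    (hc0 : c ≠ 0)
    (A : Matrix (Fin 4) (Fin 2) ℂ)
    (hA : A = Matrix.of fun i j => if j = 0 then Φ i else Lam.mulVec (star Φ) i)
    (B : ℂ → Matrix (Fin 2) (Fin 4) ℂ)
    (hB : ∀ lam, B lam = Matrix.of fun i j =>
      if i = 0 then (lam - (starRingEnd ℂ) lam₁)⁻¹ * (starRingEnd ℂ) (Φ j)
      else -((lam + lam₁)⁻¹ * (Matrix.vecMul Φ Lam) j))
    (T : ℂ → Matrix (Fin 4) (Fin 4) ℂ)
    (hT : ∀ lam, T lam = 1 - c⁻¹ • (A * B lam * Sig)) :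
    ∀ lam : ℂ, lam ≠ (starRingEnd ℂ) lam₁ → lam ≠ -lam₁ →
      (T lam).det =
        ((lam - lam₁) * (lam + (starRingEnd ℂ) lam₁)) /
          ((lam - (starRingEnd ℂ) lam₁) * (lam + lam₁)) := by
  intro lam h₁ h₂
  set s := star Φ ⬝ᵥ Sig *ᵥ Φ
  obtain ⟨hs, hd⟩ : s ≠ 0 ∧ lam₁ - (starRingEnd ℂ) lam₁ ≠ 0 := div_ne_zero_iff.mp (hc ▸ hc0)
  set a := c⁻¹ * (lam - (starRingEnd ℂ) lam₁)⁻¹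
  set b := c⁻¹ * (lam + lam₁)⁻¹
  have hA' : A = (of ![Φ, Lam *ᵥ star Φ])ᵀ := by
    ext i j; fin_cases j <;> simp [hA]
  have hB' : c⁻¹ • B lam = of ![a • star Φ, -(b • Φ ᵥ* Lam)] := by
    ext i j; fin_cases i <;> simp [hB, a, b, mul_assoc]
  have hgram : c⁻¹ • B lam * Sig * A = diagonal ![a * s, b * s] := by
    rw [hA', hB']
    subst hLam hSig
    exact darboux_gram_eq_diagonal blockSigma2_transpose blockSigma2_mul_self
      (diagonal_transpose _) (blockSigma2_mul_diagonal _ _) _ _ a b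
  have hd₁ : lam - (starRingEnd ℂ) lam₁ ≠ 0 := sub_ne_zero.mpr h₁
  have hd₂ : lam + lam₁ ≠ 0 := by rwa [← sub_neg_eq_add, sub_ne_zero]
  rw [hT, Matrix.mul_assoc, ← Matrix.mul_smul, ← Matrix.smul_mul,
    det_one_sub_mul_of_mul_eq_diagonal hgram, Fin.prod_univ_two]
  simp only [a, b, hc, Fin.isValue, Matrix.cons_val_zero, Matrix.cons_val_one]
  field_simp
  ring

theorem stmt5 (κ : ℝ) (hκ : κ = 1 ∨ κ = -1)
    (lam₁ : ℂ) (hlam₁ : lam₁ ≠ (starRingEnd ℂ) lam₁) (hlam₁' : lam₁ ≠ -(starRingEnd ℂ) lam₁)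
    (Φ : Fin 4 → ℂ)
    (Lam : Matrix (Fin 4) (Fin 4) ℂ)
    (hLam : Lam = !![0,1,0,0; -1,0,0,0; 0,0,0,1; 0,0,-1,0])
    (Sig : Matrix (Fin 4) (Fin 4) ℂ)
    (hSig : Sig = Matrix.diagonal ![1, 1, (κ : ℂ), (κ : ℂ)])
    (c : ℂ) (hc : c = (star Φ ⬝ᵥ Sig.mulVec Φ) / (lam₁ - (starRingEnd ℂ) lam₁))
    (hc0 : c ≠ 0)
    (A : Matrix (Fin 4) (Fin 2) ℂ)
    (hA : A = Matrix.of fun i j => if j = 0 then Φ i else Lam.mulVec (star Φ) i)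
    (B : ℂ → Matrix (Fin 2) (Fin 4) ℂ)
    (hB : ∀ lam, B lam = Matrix.of fun i j =>
      if i = 0 then (lam - (starRingEnd ℂ) lam₁)⁻¹ * (starRingEnd ℂ) (Φ j)
      else -((lam + lam₁)⁻¹ * (Matrix.vecMul Φ Lam) j))
    (T : ℂ → Matrix (Fin 4) (Fin 4) ℂ)
    (hT : ∀ lam, T lam = 1 - c⁻¹ • (A * B lam * Sig)) :
    ∀ lam : ℂ, lam ≠ (starRingEnd ℂ) lam₁ → lam ≠ -lam₁ →
      (T lam).det =
        ((lam - lam₁) * (lam + (starRingEnd ℂ) lam₁)) /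
          ((lam - (starRingEnd ℂ) lam₁) * (lam + lam₁)) :=
  stmt5_general κ lam₁ Φ Lam hLam Sig hSig c hc hc0 A hA B hB T hT
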